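/- Let d ≥ 3 be an integer. There is a constant C < ∞ depending only on d such that, for every t > 0 and every x ∈ ℝ^d, (G_t * log|·|^{-1})(x) ≥ −(1/2)·log t − C·(1 + |x|/t^{1/2}). -/

import Mathlib

/-!
For `r, s > 0`, `log r ≤ log s + r / s`. Taking `s = √t` and `r = ‖y‖ ≤ ‖x‖ + ‖x - y‖` gives
`log (1 / ‖y‖) ≥ -(1/2) log t - ‖x‖ / √t - ‖x - y‖ / √t` for `y ≠ 0`. Integrating against the
probability density `G_t (x - ·)` leaves `-(1/2) log t - ‖x‖ / √t - M`, where by Brownian scaling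
`M = ∫ G_t(z) ‖z‖ / √t dz = ∫ G_1(w) ‖w‖ dw` does not depend on `t`. The convolution is an honest
Lebesgue integral: `log ‖·‖` is integrable near the origin, where `G_t` is bounded, and grows at
most linearly at infinity, where `G_t` has a finite first moment.
-/

open MeasureTheory Real

/-- The standard `d`-dimensional heat kernel `G_t(x) = (2πt)^{-d/2} exp(-|x|²/(2t))`. -/
noncomputable def heatKernel (d : ℕ) (t : ℝ) (x : EuclideanSpace ℝ (Fin d)) : ℝ :=
  (2 * π * t) ^ (-(d : ℝ) / 2) * Real.exp (-‖x‖ ^ 2 / (2 * t))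

open Metric Set

lemma Real.log_le_log_add_div {r s : ℝ} (hr : 0 < r) (hs : 0 < s) : log r ≤ log s + r / s := by
  have := log_le_sub_one_of_pos (div_pos hr hs)
  rw [log_div hr.ne' hs.ne'] at this
  linarith

section HaarMeasure

variable {E : Type*} [NormedAddCommGroup E] [NormedSpace ℝ E] [FiniteDimensional ℝ E]
  [MeasurableSpace E] [BorelSpace E] (μ : Measure E) [μ.IsAddHaarMeasure]

lemma integrableOn_log_norm_ball (r : ℝ) : IntegrableOn (fun x : E => log ‖x‖) (ball 0 r) μ := by
  rcases subsingleton_or_nontrivial E with hE | hE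
  · simp [Subsingleton.elim _ (0 : E)]
  rw [integrableOn_fun_norm_addHaar μ (f := log)]
  have hlog : IntegrableOn log (Icc 0 |r|) :=
    (integrableOn_Icc_iff_integrableOn_Ioc (by simp)).2 <|
      (intervalIntegrable_iff_integrableOn_Ioc_of_le (abs_nonneg r)).1
        intervalIntegral.intervalIntegrable_log'
  exact (hlog.continuousOn_mul (continuous_pow _).continuousOn isCompact_Icc).mono_set
    (Ioo_subset_Icc_self.trans (Icc_subset_Icc_right (le_abs_self r)))

lemma integrable_norm_mul_exp_neg_mul_sq {b : ℝ} (hb : 0 < b) :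
    Integrable (fun x : E => ‖x‖ * exp (-b * ‖x‖ ^ 2)) μ := by
  rcases subsingleton_or_nontrivial E with hE | hE
  · simp [Subsingleton.elim _ (0 : E)]
  rw [integrable_fun_norm_addHaar μ (f := fun y => y * exp (-b * y ^ 2))]
  refine (integrableOn_rpow_mul_exp_neg_mul_sq hb (s := Module.finrank ℝ E)
    (by linarith [Nat.cast_nonneg (α := ℝ) (Module.finrank ℝ E)])).congr_fun
    (fun y _ => ?_) measurableSet_Ioi
  dsimp only
  rw [rpow_natCast, smul_eq_mul, ← mul_assoc, ← pow_succ, Nat.sub_add_cancel Module.finrank_pos]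

end HaarMeasure

section HeatKernel

variable {d : ℕ} {t : ℝ}

lemma heatKernel_nonneg (ht : 0 ≤ t) (x : EuclideanSpace ℝ (Fin d)) : 0 ≤ heatKernel d t x := by
  unfold heatKernel; positivity

lemma heatKernel_le (ht : 0 ≤ t) (x : EuclideanSpace ℝ (Fin d)) :
    heatKernel d t x ≤ (2 * π * t) ^ (-(d : ℝ) / 2) := by
  refine mul_le_of_le_one_right (by positivity) (exp_le_one_iff.2 ?_)
  exact div_nonpos_of_nonpos_of_nonneg (by simp) (by positivity)

lemma continuous_heatKernel (d : ℕ) (t : ℝ) : Continuous (heatKernel d t) := by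
  unfold heatKernel; fun_prop

lemma heatKernel_eq_mul_exp (x : EuclideanSpace ℝ (Fin d)) :
    heatKernel d t x = (2 * π * t) ^ (-(d : ℝ) / 2) * exp (-(2 * t)⁻¹ * ‖x‖ ^ 2) := by
  unfold heatKernel; congr 2; ring

lemma integral_heatKernel (ht : 0 < t) : ∫ x, heatKernel d t x = 1 := by
  have h2πt : 0 < 2 * π * t := by positivity
  simp_rw [heatKernel_eq_mul_exp]
  rw [integral_const_mul, GaussianFourier.integral_rexp_neg_mul_sq_norm (by positivity),
    finrank_euclideanSpace_fin, div_inv_eq_mul, ← mul_assoc, mul_comm π 2, neg_div,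
    rpow_neg h2πt.le, inv_mul_cancel₀ (rpow_pos_of_pos h2πt _).ne']

lemma integrable_heatKernel (ht : 0 < t) : Integrable (heatKernel d t) :=
  .of_integral_ne_zero (by simp [integral_heatKernel ht])

lemma integrable_heatKernel_mul_norm (ht : 0 < t) :
    Integrable (fun x : EuclideanSpace ℝ (Fin d) => heatKernel d t x * ‖x‖) := by
  refine ((integrable_norm_mul_exp_neg_mul_sq volume (b := (2 * t)⁻¹) (by positivity)).const_mul
    ((2 * π * t) ^ (-(d : ℝ) / 2))).congr (.of_forall fun x => ?_)
  dsimp only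
  rw [heatKernel_eq_mul_exp]; ring

lemma heatKernel_sqrt_smul (ht : 0 < t) (w : EuclideanSpace ℝ (Fin d)) :
    heatKernel d t (√t • w) = t ^ (-(d : ℝ) / 2) * heatKernel d 1 w := by
  simp only [heatKernel, norm_smul, mul_pow, norm_eq_abs, sq_abs, sq_sqrt ht.le, mul_one]
  rw [mul_rpow (by positivity) ht.le]
  field_simp

lemma integral_heatKernel_mul_norm (ht : 0 < t) :
    ∫ x, heatKernel d t x * ‖x‖ = √t * ∫ w, heatKernel d 1 w * ‖w‖ := by
  have h := Measure.integral_comp_smul volume (fun x => heatKernel d t x * ‖x‖) √t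
  simp only [heatKernel_sqrt_smul ht, norm_smul, norm_eq_abs, abs_of_nonneg (sqrt_nonneg t),
    finrank_euclideanSpace_fin] at h
  have hM : ∫ w, t ^ (-(d : ℝ) / 2) * heatKernel d 1 w * (√t * ‖w‖) =
      t ^ (-(d : ℝ) / 2) * √t * ∫ w, heatKernel d 1 w * ‖w‖ := by
    rw [← integral_const_mul]; congr 1 with w; ring
  have hpow : √t ^ d * t ^ (-(d : ℝ) / 2) = 1 := by
    rw [sqrt_eq_rpow, ← rpow_natCast, ← rpow_mul ht.le, ← rpow_add ht]
    ring_nf; exact rpow_zero t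
  rw [hM, smul_eq_mul, abs_of_nonneg (by positivity)] at h
  calc ∫ x, heatKernel d t x * ‖x‖
      = √t ^ d * ((√t ^ d)⁻¹ * ∫ x, heatKernel d t x * ‖x‖) := by
        field_simp
    _ = √t * ∫ w, heatKernel d 1 w * ‖w‖ := by
        rw [← h]; linear_combination (√t * ∫ w, heatKernel d 1 w * ‖w‖) * hpow

lemma integrable_heatKernel_sub_mul_log_inv_norm (ht : 0 < t) (x : EuclideanSpace ℝ (Fin d)) :
    Integrable (fun y => heatKernel d t (x - y) * log (1 / ‖y‖)) := by
  simp_rw [one_div, log_inv, mul_neg]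
  refine Integrable.neg ?_
  rw [← integrableOn_univ, ← union_compl_self (ball 0 1)]
  have hG : Continuous fun y => heatKernel d t (x - y) :=
    (continuous_heatKernel d t).comp (continuous_const.sub continuous_id)
  refine IntegrableOn.union ?_ ?_
  · refine (integrableOn_log_norm_ball volume 1).bdd_mul hG.aestronglyMeasurable
      (c := (2 * π * t) ^ (-(d : ℝ) / 2)) (.of_forall fun y => ?_)
    rw [norm_of_nonneg (heatKernel_nonneg ht.le _)]
    exact heatKernel_le ht.le _
  · have hdom : Integrable fun y =>
        ‖x‖ * heatKernel d t (x - y) + heatKernel d t (x - y) * ‖x - y‖ :=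
      (((integrable_heatKernel ht).comp_sub_left x).const_mul ‖x‖).add
        ((integrable_heatKernel_mul_norm ht).comp_sub_left x)
    refine hdom.integrableOn.mono' (hG.aestronglyMeasurable.mul
      (measurable_log.comp measurable_norm).aestronglyMeasurable) ?_
    refine ae_restrict_of_forall_mem measurableSet_ball.compl fun y hy => ?_
    have hy1 : 1 ≤ ‖y‖ := by simpa using hy
    rw [norm_mul, norm_of_nonneg (heatKernel_nonneg ht.le _), norm_of_nonneg (log_nonneg hy1)]
    have hxy : ‖y‖ ≤ ‖x‖ + ‖x - y‖ :=
      (norm_le_norm_add_norm_sub' y x).trans_eq (by rw [norm_sub_rev])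
    calc heatKernel d t (x - y) * log ‖y‖ ≤ heatKernel d t (x - y) * (‖x‖ + ‖x - y‖) := by
          gcongr
          · exact heatKernel_nonneg ht.le _
          · exact (log_le_self (norm_nonneg y)).trans hxy
      _ = _ := by ring

lemma neg_half_log_sub_div_sqrt_le_log_inv {r t : ℝ} (hr : 0 < r) (ht : 0 < t) :
    -(1 / 2) * log t - r / √t ≤ log (1 / r) := by
  have := log_le_log_add_div hr (sqrt_pos.2 ht)
  rw [log_sqrt ht.le] at this
  rw [one_div r, log_inv]
  linarith

lemma integrable_heatKernel_mul_sub_norm_div_sqrt (ht : 0 < t) (c : ℝ) :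
    Integrable (fun z : EuclideanSpace ℝ (Fin d) => heatKernel d t z * (c - ‖z‖ / √t)) :=
  (((integrable_heatKernel ht).mul_const c).sub
    ((integrable_heatKernel_mul_norm ht).div_const √t)).congr (.of_forall fun z => by
      simp only [Pi.sub_apply]; ring)

lemma integral_heatKernel_mul_sub_norm_div_sqrt (ht : 0 < t) (c : ℝ) :
    ∫ z, heatKernel d t z * (c - ‖z‖ / √t) = c - ∫ w, heatKernel d 1 w * ‖w‖ := by
  calc ∫ z, heatKernel d t z * (c - ‖z‖ / √t)
      = ∫ z, (heatKernel d t z * c - heatKernel d t z * ‖z‖ / √t) := by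
        congr 1 with z; ring
    _ = c - ∫ w, heatKernel d 1 w * ‖w‖ := by
        rw [integral_sub ((integrable_heatKernel ht).mul_const c)
          ((integrable_heatKernel_mul_norm ht).div_const √t), integral_mul_const, integral_div,
          integral_heatKernel ht, integral_heatKernel_mul_norm ht, one_mul,
          mul_div_cancel_left₀ _ (sqrt_pos.2 ht).ne']

lemma le_integral_heatKernel_sub_mul_log_inv_norm (hd : 1 ≤ d) (ht : 0 < t)
    (x : EuclideanSpace ℝ (Fin d)) :
    -(1 / 2) * log t - ‖x‖ / √t - ∫ w, heatKernel d 1 w * ‖w‖ ≤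
      ∫ y, heatKernel d t (x - y) * log (1 / ‖y‖) := by
  -- In dimension `0` the origin is an atom, and there `log (1 / 0) = 0` violates the pointwise bound.
  have : NeZero d := ⟨by omega⟩
  rw [← integral_heatKernel_mul_sub_norm_div_sqrt ht, ← integral_sub_left_eq_self _ volume x]
  refine integral_mono_ae ((integrable_heatKernel_mul_sub_norm_div_sqrt ht _).comp_sub_left x)
    (integrable_heatKernel_sub_mul_log_inv_norm ht x) ?_
  filter_upwards [volume.ae_ne 0] with y hy
  refine mul_le_mul_of_nonneg_left ?_ (heatKernel_nonneg ht.le _)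
  have hxy : ‖y‖ ≤ ‖x‖ + ‖x - y‖ :=
    (norm_le_norm_add_norm_sub' y x).trans_eq (by rw [norm_sub_rev])
  calc -(1 / 2) * log t - ‖x‖ / √t - ‖x - y‖ / √t
      ≤ -(1 / 2) * log t - ‖y‖ / √t := by
        rw [sub_sub, ← add_div]; gcongr
    _ ≤ log (1 / ‖y‖) := neg_half_log_sub_div_sqrt_le_log_inv (norm_pos_iff.2 hy) ht

end HeatKernel

/-- For `d ≥ 3` there is `C = C(d)` such that for all `t > 0` and all `x ∈ ℝ^d`,
`(G_t * log|·|^{-1})(x) ≥ -(1/2) log t - C(1 + |x|/√t)`. -/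
theorem heat_conv_log_lower_bound (d : ℕ) (hd : 3 ≤ d) :
    ∃ C : ℝ, ∀ t : ℝ, 0 < t → ∀ x : EuclideanSpace ℝ (Fin d),
      -(1 / 2) * Real.log t - C * (1 + ‖x‖ / Real.sqrt t) ≤
        ∫ y : EuclideanSpace ℝ (Fin d), heatKernel d t (x - y) * Real.log (1 / ‖y‖) := by
  set M := ∫ w, heatKernel d 1 w * ‖w‖
  have hM : 0 ≤ M :=
    integral_nonneg fun w => mul_nonneg (heatKernel_nonneg zero_le_one w) (norm_nonneg w)
  refine ⟨1 + M, fun t ht x =>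
    (le_integral_heatKernel_sub_mul_log_inv_norm (by omega) ht x).trans' ?_⟩
  have : 0 ≤ ‖x‖ / √t := by positivity
  nlinarith [mul_nonneg hM this]
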